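/- arXiv:math/0405543 — 3 statements merged into one kernel-verified Lean document; each statement's English description precedes it below -/
import Mathlib

section
/- The Carlitz polynomials satisfy the K-binomial identity e_i(st) = Σ_{n=0}^{i} (i choose n)_K · e_n(t) · (e_{i-n}(s))^{q^n} for all s, t, where (i choose n)_K = D_i / (D_n D_{i-n}^{q^n}). -/
noncomputable section

/-- `[i] = x^{q^i} - x`. -/
def brk {K : Type*} [CommRing K] (q : ℕ) (x : K) (i : ℕ) : K := x ^ q ^ i - x

/-- Carlitz factorial: `D_0 = 1`, `D_i = [i] D_{i-1}^q`. -/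
def Dfac {K : Type*} [CommRing K] (q : ℕ) (x : K) : ℕ → K
  | 0 => 1
  | i + 1 => brk q x (i + 1) * (Dfac q x i) ^ q

/-- The `K`-binomial coefficient `(i choose n)_K = D_i / (D_n D_{i-n}^{q^n})`. -/
def kBinom {K : Type*} [Field K] (q : ℕ) (x : K) (i n : ℕ) : K :=
  Dfac q x i / (Dfac q x n * (Dfac q x (i - n)) ^ q ^ n)

/-- The Carlitz polynomial `e_i(t) = ∏_{m ∈ F_q[x], deg m < i} (t - m)`. -/
def carlitzE (F : Type*) [Field F] [Fintype F] {K : Type*} [Field K] [Algebra F K]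
    (x : K) (i : ℕ) : Polynomial K :=
  ∏ c : Fin i → F,
    (Polynomial.X - Polynomial.C (∑ j : Fin i, algebraMap F K (c j) * x ^ (j : ℕ)))

/-!
Splitting off the top coefficient of `m` writes `e_{i+1}(u)` as `∏_{a ∈ 𝔽_q} e_i(u - a x^i)`.
Since `∏_a (z - a c) = z^q - c^{q-1} z`, induction shows that `e_i` is `𝔽_q`-linear and satisfies
Carlitz's recursion `e_{i+1}(u) = e_i(u)^q - e_i(x^i)^{q-1} e_i(u)`. Splitting off the constant
coefficient instead gives `e_{i+1}(x w) = x^{q^{i+1}} (e_i(w)^q - e_i(x⁻¹)^{q-1} e_i(w))`, and the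
two recursions together propagate `e_i(x^i) = D_i` jointly with
`x^{q^{i+1}} e_i(x⁻¹)^{q-1} = x D_i^{q-1}`.

The identity then follows by induction on `i`: apply the recursion to `e_i(st)`, push the `q`-th
power through the sum of the induction hypothesis, rewrite each term with the recursions for
`e_n(t)` and `e_{i-n}(s)`, and recombine with the Pascal rule
`(i+1 choose n+1)_K = (i choose n)_K^q + (i choose n+1)_K^q D_{n+1}^{q-1}`, which comes from
`[i+1] = [n+1] + [i-n]^{q^{n+1}}`.
-/

open Polynomial Finset

section KBinom

variable {K : Type*} [Field K]

theorem div_pow_mul_pow_sub_one {a b : K} {n : ℕ} (hn : n ≠ 0) :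
    (a / b) ^ n * b ^ (n - 1) = a ^ (n - 1) * (a / b) := by
  rcases eq_or_ne b 0 with rfl | hb
  · simp [zero_pow hn]
  · rw [div_pow, ← pow_sub_one_mul hn a, ← pow_sub_one_mul hn b]
    field_simp

theorem Dfac_succ (q : ℕ) (x : K) (i : ℕ) :
    Dfac q x (i + 1) = brk q x (i + 1) * Dfac q x i ^ q :=
  rfl

theorem kBinom_zero {q : ℕ} {x : K} {i : ℕ} (h : Dfac q x i ≠ 0) : kBinom q x i 0 = 1 := by
  simp [kBinom, Dfac, h]

theorem kBinom_self {q : ℕ} {x : K} {i : ℕ} (h : Dfac q x i ≠ 0) : kBinom q x i i = 1 := by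
  simp [kBinom, Dfac, h]

theorem kBinom_pow_mul {q : ℕ} (hq : q ≠ 0) (x : K) (i n : ℕ) :
    kBinom q x i n ^ q * (Dfac q x n ^ (q - 1) * (Dfac q x (i - n) ^ (q - 1)) ^ q ^ n)
      = Dfac q x i ^ (q - 1) * kBinom q x i n := by
  rw [pow_right_comm, ← mul_pow]
  exact div_pow_mul_pow_sub_one hq

end KBinom

theorem Finset.sum_range_add_sum_range_eq_of_pascal {M : Type*} [AddCommMonoid M]
    (a c P : ℕ → M) (i : ℕ) (h0 : P 0 = c 0) (hsucc : ∀ n < i, P (n + 1) = a n + c (n + 1))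
    (hlast : P (i + 1) = a i) :
    ∑ n ∈ range (i + 1), a n + ∑ n ∈ range (i + 1), c n = ∑ m ∈ range (i + 2), P m := by
  rw [sum_range_succ' P, sum_range_succ (fun n => P (n + 1)), sum_range_succ a,
    sum_range_succ' c, sum_congr rfl fun n hn => hsucc n (mem_range.mp hn), sum_add_distrib,
    h0, hlast]
  abel

section Carlitz

variable {F : Type*} [Field F] [Fintype F] {K : Type*} [Field K] [Algebra F K]

local notation "q" => Fintype.card F

theorem frobeniusAlgHom_pow_apply (n : ℕ) (u : K) :
    (FiniteField.frobeniusAlgHom F K ^ n) u = u ^ q ^ n := by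
  rw [AlgHom.coe_pow, FiniteField.coe_frobeniusAlgHom, pow_iterate]

theorem sub_pow_card_pow (u v : K) (n : ℕ) : (u - v) ^ q ^ n = u ^ q ^ n - v ^ q ^ n := by
  simp only [← frobeniusAlgHom_pow_apply (F := F), map_sub]

theorem neg_one_pow_card_sub_one : (-1 : K) ^ (q - 1) = 1 := by
  simpa using congrArg (algebraMap F K) (FiniteField.pow_card_sub_one_eq_one (-1 : F) (by simp))

theorem prod_X_sub_C_eq_X_pow_card_sub_X : ∏ a : F, (X - C a) = (X ^ q - X : F[X]) := by
  have hmonic : (X ^ q - X : F[X]).Monic :=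
    monic_X_pow_sub (by rw [degree_X]; exact_mod_cast Fintype.one_lt_card)
  have hcard : Multiset.card (X ^ q - X : F[X]).roots = (X ^ q - X : F[X]).natDegree := by
    rw [FiniteField.roots_X_pow_card_sub_X,
      FiniteField.X_pow_card_sub_X_natDegree_eq F Fintype.one_lt_card]
    rfl
  rw [← prod_multiset_X_sub_C_of_monic_of_roots_card_eq hmonic hcard,
    FiniteField.roots_X_pow_card_sub_X]
  rfl

theorem prod_sub_algebraMap_mul (z c : K) :
    ∏ a : F, (z - algebraMap F K a * c) = z ^ q - c ^ (q - 1) * z := by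
  have hq : q ≠ 0 := Fintype.card_ne_zero
  rcases eq_or_ne c 0 with rfl | hc
  · simp [zero_pow (Nat.sub_ne_zero_of_lt Fintype.one_lt_card)]
  have hroots : ∏ a : F, (z / c - algebraMap F K a) = (z / c) ^ q - z / c := by
    simpa [map_prod] using congrArg (aeval (z / c)) (prod_X_sub_C_eq_X_pow_card_sub_X (F := F))
  calc ∏ a : F, (z - algebraMap F K a * c)
      = ∏ a : F, c * (z / c - algebraMap F K a) :=
        prod_congr rfl fun a _ => by field_simp
    _ = c ^ q * ((z / c) ^ q - z / c) := by
        rw [prod_mul_distrib, prod_const, card_univ, hroots]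
    _ = z ^ q - c ^ (q - 1) * z := by
        have hz : c * (z / c) = z := mul_div_cancel₀ z hc
        rw [mul_sub, ← mul_pow, hz, ← pow_sub_one_mul hq c, mul_assoc, hz]

variable (x : K)

theorem eval_carlitzE (i : ℕ) (u : K) :
    (carlitzE F x i).eval u
      = ∏ c : Fin i → F, (u - ∑ j : Fin i, algebraMap F K (c j) * x ^ (j : ℕ)) := by
  simp [carlitzE, eval_prod, eval_finsetSum]

theorem eval_carlitzE_zero (u : K) : (carlitzE F x 0).eval u = u := by
  simp [eval_carlitzE]

theorem eval_carlitzE_succ_eq_prod (i : ℕ) (u : K) :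
    (carlitzE F x (i + 1)).eval u
      = ∏ a : F, (carlitzE F x i).eval (u - algebraMap F K a * x ^ i) := by
  simp only [eval_carlitzE, ← Fintype.prod_prod_type']
  refine Fintype.prod_equiv (Fin.snocEquiv fun _ => F).symm _ _ fun c => ?_
  simp only [Fin.snocEquiv, Equiv.coe_fn_symm_mk, Fin.init, Fin.sum_univ_castSucc,
    Fin.val_castSucc, Fin.val_last]
  ring

theorem eval_carlitzE_succ_eq_prod_cons (i : ℕ) (u : K) :
    (carlitzE F x (i + 1)).eval u
      = ∏ a : F, ∏ c : Fin i → F,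
          (u - algebraMap F K a - x * ∑ j : Fin i, algebraMap F K (c j) * x ^ (j : ℕ)) := by
  simp only [eval_carlitzE, ← Fintype.prod_prod_type']
  refine Fintype.prod_equiv (Fin.consEquiv fun _ => F).symm _ _ fun c => ?_
  simp only [Fin.consEquiv, Equiv.coe_fn_symm_mk, Fin.tail, Fin.sum_univ_succ, Fin.val_zero,
    Fin.val_succ, pow_zero, mul_one]
  rw [mul_sum, sub_sub]
  congr 2
  exact sum_congr rfl fun j _ => by ring

theorem eval_carlitzE_succ_of_linearMap {i : ℕ} (L : K →ₗ[F] K)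
    (hL : ∀ u, (carlitzE F x i).eval u = L u) (u : K) :
    (carlitzE F x (i + 1)).eval u = L u ^ q - L (x ^ i) ^ (q - 1) * L u := by
  simp only [eval_carlitzE_succ_eq_prod, hL, map_sub, ← Algebra.smul_def, map_smul]
  simp only [Algebra.smul_def]
  exact prod_sub_algebraMap_mul _ _

theorem exists_linearMap_eval_carlitzE (i : ℕ) :
    ∃ L : K →ₗ[F] K, ∀ u, (carlitzE F x i).eval u = L u := by
  induction i with
  | zero => exact ⟨LinearMap.id, eval_carlitzE_zero x⟩
  | succ i ih =>
    obtain ⟨L, hL⟩ := ih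
    refine ⟨((FiniteField.frobeniusAlgHom F K).toLinearMap
      - LinearMap.mulLeft F (L (x ^ i) ^ (q - 1))) ∘ₗ L, fun u => ?_⟩
    rw [eval_carlitzE_succ_of_linearMap x L hL]
    rfl

theorem eval_carlitzE_sub_algebraMap_mul (i : ℕ) (a : F) (u v : K) :
    (carlitzE F x i).eval (u - algebraMap F K a * v)
      = (carlitzE F x i).eval u - algebraMap F K a * (carlitzE F x i).eval v := by
  obtain ⟨L, hL⟩ := exists_linearMap_eval_carlitzE (F := F) x i
  simp only [hL, ← Algebra.smul_def, map_sub, map_smul]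

theorem eval_carlitzE_succ_eq_pow_sub_mul (i : ℕ) (u : K) :
    (carlitzE F x (i + 1)).eval u
      = (carlitzE F x i).eval u ^ q
        - (carlitzE F x i).eval (x ^ i) ^ (q - 1) * (carlitzE F x i).eval u := by
  obtain ⟨L, hL⟩ := exists_linearMap_eval_carlitzE (F := F) x i
  rw [eval_carlitzE_succ_of_linearMap x L hL, hL, hL]

theorem eval_carlitzE_succ_x_mul (hx : x ≠ 0) (i : ℕ) (w : K) :
    (carlitzE F x (i + 1)).eval (x * w)
      = x ^ q ^ (i + 1)
        * ((carlitzE F x i).eval w ^ q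
          - (carlitzE F x i).eval x⁻¹ ^ (q - 1) * (carlitzE F x i).eval w) := by
  have hfactor : ∀ a : F,
      ∏ c : Fin i → F,
          (x * w - algebraMap F K a - x * ∑ j : Fin i, algebraMap F K (c j) * x ^ (j : ℕ))
        = x ^ q ^ i * (carlitzE F x i).eval (w - algebraMap F K a * x⁻¹) := by
    intro a
    have hcard : Fintype.card (Fin i → F) = q ^ i := by simp
    rw [eval_carlitzE, ← hcard, ← card_univ, ← prod_const, ← prod_mul_distrib]
    refine prod_congr rfl fun c _ => ?_
    field_simp
  rw [eval_carlitzE_succ_eq_prod_cons]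
  simp only [hfactor, prod_mul_distrib, prod_const, card_univ, eval_carlitzE_sub_algebraMap_mul,
    prod_sub_algebraMap_mul, ← pow_mul, ← pow_succ]

theorem brk_add (a b : ℕ) : brk q x (a + b) = brk q x b + brk q x a ^ q ^ b := by
  rw [brk, brk, brk, sub_pow_card_pow, ← pow_mul, ← pow_add]
  ring

variable {x}

theorem eval_carlitzE_x_pow_and_inv (hx : x ≠ 0) (i : ℕ) :
    (carlitzE F x i).eval (x ^ i) = Dfac q x i ∧
      x ^ q ^ (i + 1) * (carlitzE F x i).eval x⁻¹ ^ (q - 1) = x * Dfac q x i ^ (q - 1) := by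
  have hq : q ≠ 0 := Fintype.card_ne_zero
  induction i with
  | zero =>
    refine ⟨by simp [eval_carlitzE_zero, Dfac], ?_⟩
    rw [eval_carlitzE_zero, zero_add, pow_one, Dfac, one_pow, mul_one, inv_pow,
      ← pow_sub_one_mul hq x]
    field_simp
  | succ i ih =>
    obtain ⟨hd, hδ⟩ := ih
    set D := Dfac q x i
    set δ := (carlitzE F x i).eval x⁻¹
    set Y := x ^ q ^ (i + 1)
    have hDfac : Dfac q x (i + 1) = (Y - x) * D ^ q := rfl
    constructor
    · rw [pow_succ', eval_carlitzE_succ_x_mul x hx, hd, hDfac]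
      linear_combination (-D) * hδ - x * pow_sub_one_mul hq D
    · have hY : x ^ q ^ (i + 1 + 1) = Y ^ q := by rw [pow_succ, pow_mul]
      have hsign : (x - Y) ^ (q - 1) = (Y - x) ^ (q - 1) := by
        rw [← neg_sub, neg_pow, neg_one_pow_card_sub_one, one_mul]
      rw [eval_carlitzE_succ_eq_pow_sub_mul, hd, hDfac, hY]
      calc Y ^ q * (δ ^ q - D ^ (q - 1) * δ) ^ (q - 1)
          = (Y * δ ^ (q - 1)) * (Y * (δ ^ (q - 1) - D ^ (q - 1))) ^ (q - 1) := by
            rw [← pow_sub_one_mul hq Y, ← pow_sub_one_mul hq δ, ← sub_mul, mul_pow, mul_pow]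
            ring
        _ = (x * D ^ (q - 1)) * ((x - Y) * D ^ (q - 1)) ^ (q - 1) := by
            rw [mul_sub, hδ, ← sub_mul]
        _ = x * ((Y - x) * D ^ q) ^ (q - 1) := by
            rw [mul_pow, hsign, ← pow_sub_one_mul hq D, mul_pow]
            ring

theorem eval_carlitzE_x_pow (hx : x ≠ 0) (i : ℕ) :
    (carlitzE F x i).eval (x ^ i) = Dfac q x i :=
  (eval_carlitzE_x_pow_and_inv hx i).1

theorem eval_carlitzE_succ (hx : x ≠ 0) (i : ℕ) (u : K) :
    (carlitzE F x (i + 1)).eval u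
      = (carlitzE F x i).eval u ^ q - Dfac q x i ^ (q - 1) * (carlitzE F x i).eval u := by
  rw [eval_carlitzE_succ_eq_pow_sub_mul, eval_carlitzE_x_pow hx]

theorem brk_ne_zero (hx : Transcendental F x) {j : ℕ} (hj : j ≠ 0) : brk q x j ≠ 0 := fun h =>
  hx ⟨X ^ q ^ j - X, FiniteField.X_pow_card_pow_sub_X_ne_zero F hj Fintype.one_lt_card,
    by simpa [brk] using h⟩

theorem Dfac_ne_zero (hx : Transcendental F x) (i : ℕ) : Dfac q x i ≠ 0 := by
  induction i with
  | zero => exact one_ne_zero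
  | succ i ih => exact mul_ne_zero (brk_ne_zero hx i.succ_ne_zero) (pow_ne_zero _ ih)

theorem kBinom_succ_succ (hx : Transcendental F x) {i n : ℕ} (h : n < i) :
    kBinom q x (i + 1) (n + 1)
      = kBinom q x i n ^ q + kBinom q x i (n + 1) ^ q * Dfac q x (n + 1) ^ (q - 1) := by
  obtain ⟨k, rfl⟩ : ∃ k, i = n + k + 1 := ⟨i - n - 1, by omega⟩
  obtain ⟨r, hr⟩ : ∃ r, q = r + 1 := ⟨q - 1, (Nat.succ_pred_eq_of_pos Fintype.card_pos).symm⟩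
  have hD := Dfac_ne_zero hx
  have hbrk : brk q x (n + k + 1 + 1) = brk q x (n + 1) + brk q x (k + 1) ^ q ^ (n + 1) := by
    rw [← brk_add, show k + 1 + (n + 1) = n + k + 1 + 1 by omega]
  simp only [kBinom, show n + k + 1 + 1 - (n + 1) = k + 1 by omega,
    show n + k + 1 - n = k + 1 by omega, show n + k + 1 - (n + 1) = k by omega]
  rw [div_pow, div_pow, div_mul_eq_mul_div, div_add_div _ _ (by simp [hD]) (by simp [hD]),
    div_eq_div_iff (by simp [hD]) (by simp [hD]), Dfac_succ _ _ (n + k + 1), Dfac_succ _ _ n,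
    Dfac_succ _ _ k, hbrk, hr, Nat.add_sub_cancel]
  ring

theorem kBinom_term_pow_sub (hx : x ≠ 0) {i n : ℕ} (hn : n ≤ i) (s t : K) :
    (kBinom q x i n * (carlitzE F x n).eval t * (carlitzE F x (i - n)).eval s ^ q ^ n) ^ q
        - Dfac q x i ^ (q - 1)
          * (kBinom q x i n * (carlitzE F x n).eval t * (carlitzE F x (i - n)).eval s ^ q ^ n)
      = kBinom q x i n ^ q * (carlitzE F x (n + 1)).eval t
          * (carlitzE F x (i - n)).eval s ^ q ^ (n + 1)
        + kBinom q x i n ^ q * Dfac q x n ^ (q - 1) * (carlitzE F x n).eval t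
          * (carlitzE F x (i + 1 - n)).eval s ^ q ^ n := by
  have ht := eval_carlitzE_succ (F := F) hx n t
  have hs : (carlitzE F x (i + 1 - n)).eval s ^ q ^ n
      = (carlitzE F x (i - n)).eval s ^ q ^ (n + 1)
        - (Dfac q x (i - n) ^ (q - 1)) ^ q ^ n * (carlitzE F x (i - n)).eval s ^ q ^ n := by
    rw [show i + 1 - n = i - n + 1 by omega, eval_carlitzE_succ hx, sub_pow_card_pow, mul_pow,
      ← pow_mul, ← pow_succ']
  have hb := kBinom_pow_mul (Fintype.card_ne_zero (α := F)) x i n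
  linear_combination (-kBinom q x i n ^ q * (carlitzE F x (i - n)).eval s ^ q ^ (n + 1)) * ht
    - kBinom q x i n ^ q * Dfac q x n ^ (q - 1) * (carlitzE F x n).eval t * hs
    + (carlitzE F x n).eval t * (carlitzE F x (i - n)).eval s ^ q ^ n * hb

theorem eval_carlitzE_mul (hx : Transcendental F x) (i : ℕ) (s t : K) :
    (carlitzE F x i).eval (s * t)
      = ∑ n ∈ range (i + 1),
          kBinom q x i n * (carlitzE F x n).eval t * (carlitzE F x (i - n)).eval s ^ q ^ n := by
  have hx0 : x ≠ 0 := by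
    rintro rfl
    exact hx isAlgebraic_zero
  have hD := Dfac_ne_zero hx
  induction i with
  | zero => simp [eval_carlitzE_zero, kBinom_zero (hD 0), mul_comm]
  | succ i ih =>
    calc (carlitzE F x (i + 1)).eval (s * t)
        = (carlitzE F x i).eval (s * t) ^ q
            - Dfac q x i ^ (q - 1) * (carlitzE F x i).eval (s * t) :=
          eval_carlitzE_succ hx0 i _
      _ = ∑ n ∈ range (i + 1),
            ((kBinom q x i n * (carlitzE F x n).eval t * (carlitzE F x (i - n)).eval s ^ q ^ n) ^ q
              - Dfac q x i ^ (q - 1)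
                * (kBinom q x i n * (carlitzE F x n).eval t
                  * (carlitzE F x (i - n)).eval s ^ q ^ n)) := by
          rw [ih, sum_sub_distrib, mul_sum]
          congr 1
          exact map_sum (FiniteField.frobeniusAlgHom F K) _ _
      _ = ∑ n ∈ range (i + 1), kBinom q x i n ^ q * (carlitzE F x (n + 1)).eval t
            * (carlitzE F x (i - n)).eval s ^ q ^ (n + 1)
          + ∑ n ∈ range (i + 1), kBinom q x i n ^ q * Dfac q x n ^ (q - 1)
            * (carlitzE F x n).eval t * (carlitzE F x (i + 1 - n)).eval s ^ q ^ n := by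
          rw [← sum_add_distrib]
          exact sum_congr rfl fun n hn =>
            kBinom_term_pow_sub hx0 (Nat.lt_succ_iff.mp (mem_range.mp hn)) s t
      _ = _ := by
          refine sum_range_add_sum_range_eq_of_pascal _ _ _ i ?_ (fun n hn => ?_) ?_
          · simp [kBinom_zero (hD _), Dfac]
          · rw [kBinom_succ_succ hx hn, Nat.add_sub_add_right]
            ring
          · simp [kBinom_self (hD _)]

end Carlitz

/-- The `K`-binomial identity for the Carlitz polynomials:
`e_i(st) = Σ_{n=0}^{i} (i choose n)_K e_n(t) (e_{i-n}(s))^{q^n}`,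
as an identity in two variables `s, t` over `F_q(x)`. -/
theorem carlitzE_K_binomial {F : Type*} [Field F] [Fintype F]
    (q : ℕ) (hq : q = Fintype.card F) (i : ℕ) (s t : RatFunc F) :
    (carlitzE F (RatFunc.X : RatFunc F) i).eval (s * t)
      = ∑ n ∈ Finset.range (i + 1),
          kBinom q (RatFunc.X : RatFunc F) i n
            * (carlitzE F (RatFunc.X : RatFunc F) n).eval t
            * ((carlitzE F (RatFunc.X : RatFunc F) (i - n)).eval s) ^ q ^ n := by
  subst hq
  exact eval_carlitzE_mul RatFunc.transcendental_X i s t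
end
end

section
/- If {P_n} is the basic sequence of a delta operator δ = τ^{-1}δ_0, then δ_0^{(l)} P_j = (D_j / D_{j-l}^{q^l}) P_{j-l}^{q^l} for all l ≤ j, where δ_0^{(l)} = τ^l δ^l. -/
/-!
Since `τ δ = δ₀` is diagonal, with eigenvalue `c n` on `t^{q^n}`, conjugating by `τ^l` turns `δ₀`
into the diagonal operator with eigenvalues `c (n - l)^{q^l}`. Hence
`τ^{l+1} δ^{l+1} P_j = τ^l δ₀ δ^l P_j`, and induction on `l` together with `δ₀ P_n = [n] τ P_{n-1}`
yields the coefficient `∏_{i<l} [j-i]^{q^i}`. Unwinding `D_i = [i] D_{i-1}^q` `l` times shows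
`D_j = (∏_{i<l} [j-i]^{q^i}) D_{j-l}^{q^l}`, and the Carlitz factorials of the variable `X` of
`F((X))` do not vanish because `X^{q^i} ≠ X` for `i ≥ 1`.
-/

noncomputable section

/-- The Frobenius `τ` on `F_q`-linear polynomials `Σ a_k t^{q^k}` (encoded as `ℕ →₀ L`). -/
def frob {L : Type*} [CommRing L] (q : ℕ) (u : ℕ →₀ L) : ℕ →₀ L :=
  u.sum fun k a => Finsupp.single (k + 1) (a ^ q)

/-- Evaluation of the `F_q`-linear polynomial `Σ a_k t^{q^k}` at `t = 1`. -/
def eval1 {L : Type*} [CommRing L] (u : ℕ →₀ L) : L :=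
  u.sum fun _ a => a

lemma LinearMap.apply_eq_pointwise_smul {α R : Type*} [CommSemiring R]
    {f : (α →₀ R) →ₗ[R] (α →₀ R)} {c : α → R}
    (hf : ∀ a, f (Finsupp.single a 1) = c a • Finsupp.single a 1) (u : α →₀ R) : f u = c • u := by
  induction u using Finsupp.induction_linear with
  | zero => simp
  | add u v hu hv => rw [map_add, hu, hv, smul_add]
  | single a r =>
    rw [← mul_one r, ← smul_eq_mul, ← Finsupp.smul_single, map_smul, hf]
    ext b
    by_cases h : a = b <;> simp [h, mul_comm]

section Frobenius

variable {L : Type*} [CommRing L] {q : ℕ}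

lemma frob_apply_zero (u : ℕ →₀ L) : frob q u 0 = 0 := by
  simp [frob, Finsupp.sum_apply]

lemma frob_apply_succ (hq : q ≠ 0) (u : ℕ →₀ L) (n : ℕ) : frob q u (n + 1) = u n ^ q := by
  by_cases hn : u n = 0 <;> simp [frob, Finsupp.sum_apply, Finsupp.single_apply, hn, hq]

lemma frob_smul (hq : q ≠ 0) (a : L) (u : ℕ →₀ L) : frob q (a • u) = a ^ q • frob q u := by
  ext (_ | n) <;> simp [frob_apply_zero, frob_apply_succ hq, mul_pow]

lemma frob_pointwise_smul (hq : q ≠ 0) (e : ℕ → L) (u : ℕ →₀ L) :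
    frob q (e • u) = (fun n => e (n - 1) ^ q) • frob q u := by
  ext (_ | n) <;> simp [frob_apply_zero, frob_apply_succ hq, mul_pow]

lemma frob_iterate_smul (hq : q ≠ 0) (l : ℕ) (a : L) (u : ℕ →₀ L) :
    (frob q)^[l] (a • u) = a ^ q ^ l • (frob q)^[l] u := by
  induction l generalizing a u with
  | zero => simp
  | succ l ih => rw [Function.iterate_succ_apply, Function.iterate_succ_apply, frob_smul hq, ih,
      ← pow_mul, ← pow_succ']

lemma frob_iterate_pointwise_smul (hq : q ≠ 0) (l : ℕ) (e : ℕ → L) (u : ℕ →₀ L) :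
    (frob q)^[l] (e • u) = (fun n => e (n - l) ^ q ^ l) • (frob q)^[l] u := by
  induction l generalizing e u with
  | zero => simp
  | succ l ih =>
    rw [Function.iterate_succ_apply, Function.iterate_succ_apply, frob_pointwise_smul hq, ih]
    simp only [← pow_mul, ← pow_succ', Nat.sub_sub]

theorem frob_iterate_delta_iterate_eq_prod_smul (hq : q ≠ 0) {c : ℕ → L}
    {δ : (ℕ →₀ L) → (ℕ →₀ L)} (hδ : ∀ u, frob q (δ u) = c • u) {b : ℕ → L} {P : ℕ → ℕ →₀ L}
    (hP : ∀ n, 1 ≤ n → c • P n = b n • frob q (P (n - 1))) (l j : ℕ) (hlj : l ≤ j) :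
    (frob q)^[l] (δ^[l] (P j))
      = (∏ i ∈ Finset.range l, b (j - i) ^ q ^ i) • (frob q)^[l] (P (j - l)) := by
  induction l with
  | zero => simp
  | succ l ih =>
    calc (frob q)^[l + 1] (δ^[l + 1] (P j))
        = (frob q)^[l] (c • δ^[l] (P j)) := by
          rw [Function.iterate_succ_apply' δ, Function.iterate_succ_apply, hδ]
      _ = (∏ i ∈ Finset.range l, b (j - i) ^ q ^ i) • (frob q)^[l] (c • P (j - l)) := by
          rw [frob_iterate_pointwise_smul hq, ih (by omega), smul_comm,
            frob_iterate_pointwise_smul hq]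
      _ = (∏ i ∈ Finset.range (l + 1), b (j - i) ^ q ^ i)
            • (frob q)^[l + 1] (P (j - (l + 1))) := by
          rw [hP (j - l) (by omega), frob_iterate_smul hq, ← Function.iterate_succ_apply,
            Nat.sub_sub, smul_smul, Finset.prod_range_succ]

end Frobenius

lemma Dfac_eq_prod_mul_pow {K : Type*} [CommRing K] (q : ℕ) (x : K) {l j : ℕ} (hlj : l ≤ j) :
    Dfac q x j = (∏ i ∈ Finset.range l, brk q x (j - i) ^ q ^ i) * Dfac q x (j - l) ^ q ^ l := by
  induction l with
  | zero => simp
  | succ l ih =>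
    obtain ⟨k, hk⟩ : ∃ k, j - l = k + 1 := ⟨j - l - 1, by omega⟩
    rw [ih (by omega), hk, Dfac, Finset.prod_range_succ, ← hk, show j - (l + 1) = k by omega,
      mul_pow, ← pow_mul, ← pow_succ', mul_assoc]

section Nonvanishing

variable {F : Type*} [CommRing F] {q : ℕ}

lemma brk_single_one_ne_zero [Nontrivial F] (hq : 1 < q) {i : ℕ} (hi : i ≠ 0) :
    brk q (HahnSeries.single (1 : ℤ) (1 : F)) i ≠ 0 := by
  have hqi : (q : ℤ) ^ i ≠ 1 := by exact_mod_cast (Nat.one_lt_pow hi hq).ne'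
  rw [brk, sub_ne_zero, HahnSeries.single_pow, one_pow, nsmul_one]
  intro h
  simpa [HahnSeries.coeff_single_of_ne hqi] using congrArg (·.coeff ((q : ℤ) ^ i)) h

lemma Dfac_ne_zero_s9 [IsDomain F] (hq : 1 < q) (i : ℕ) :
    Dfac q (HahnSeries.single (1 : ℤ) (1 : F)) i ≠ 0 := by
  induction i with
  | zero => exact one_ne_zero
  | succ i ih => exact mul_ne_zero (brk_single_one_ne_zero hq i.succ_ne_zero) (pow_ne_zero _ ih)

end Nonvanishing

theorem delta0_iter_basic_general {F L : Type*} [Field F] [Fintype F] [Field L]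
    [Algebra (LaurentSeries F) L]
    (q : ℕ) (hq : q = Fintype.card F)
    (c : ℕ → L)
    (δ₀ : (ℕ →₀ L) →ₗ[L] (ℕ →₀ L))
    (hδ₀ : ∀ n : ℕ, δ₀ (Finsupp.single n 1) = c n • Finsupp.single n 1)
    (δ : (ℕ →₀ L) → (ℕ →₀ L)) (hδ : ∀ u, frob q (δ u) = δ₀ u)
    (P : ℕ → (ℕ →₀ L))
    (hPn : ∀ n, 1 ≤ n →
      δ₀ (P n)
        = algebraMap (LaurentSeries F) L
            (brk q (HahnSeries.single (1 : ℤ) (1 : F)) n) • frob q (P (n - 1))) :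
    ∀ l j : ℕ, l ≤ j →
      (frob q)^[l] (δ^[l] (P j))
        = algebraMap (LaurentSeries F) L
            (Dfac q (HahnSeries.single (1 : ℤ) (1 : F)) j
              / (Dfac q (HahnSeries.single (1 : ℤ) (1 : F)) (j - l)) ^ q ^ l)
          • (frob q)^[l] (P (j - l)) := by
  have hq1 : 1 < q := hq ▸ Fintype.one_lt_card
  have hdiag : ∀ u, δ₀ u = c • u := LinearMap.apply_eq_pointwise_smul hδ₀
  intro l j hlj
  rw [frob_iterate_delta_iterate_eq_prod_smul (by omega) (fun u => (hδ u).trans (hdiag u))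
    (fun n hn => (hdiag (P n)).symm.trans (hPn n hn)) l j hlj]
  congr 1
  rw [div_eq_of_eq_mul (pow_ne_zero _ (Dfac_ne_zero_s9 hq1 _)) (Dfac_eq_prod_mul_pow q _ hlj),
    map_prod]
  simp only [map_pow]

/-- If `{P_n}` is the basic sequence of a delta operator `δ = τ^{-1} δ₀` (so that
`τ ∘ δ = δ₀` and `δ₀ P_n = [n] P_{n-1}^q`), then `δ₀^{(l)} P_j = (D_j / D_{j-l}^{q^l}) P_{j-l}^{q^l}`
for all `l ≤ j`, where `δ₀^{(l)} = τ^l δ^l`. -/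
theorem delta0_iter_basic {F L : Type*} [Field F] [Fintype F] [Field L]
    [Algebra (LaurentSeries F) L]
    (p : ℕ) [Fact p.Prime] [CharP F p] [ExpChar L p] [PerfectRing L p]
    (q : ℕ) (hq : q = Fintype.card F)
    (c : ℕ → L) (hc0 : c 0 = 0) (hc : ∀ n, 1 ≤ n → c n ≠ 0)
    (δ₀ : (ℕ →₀ L) →ₗ[L] (ℕ →₀ L))
    (hδ₀ : ∀ n : ℕ, δ₀ (Finsupp.single n 1) = c n • Finsupp.single n 1)
    (δ : (ℕ →₀ L) → (ℕ →₀ L)) (hδ : ∀ u, frob q (δ u) = δ₀ u)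
    (P : ℕ → (ℕ →₀ L))
    (hPdeg : ∀ n : ℕ, P n n ≠ 0 ∧ ∀ k, n < k → P n k = 0)
    (hP01 : eval1 (P 0) = 1) (hP1 : ∀ n, 1 ≤ n → eval1 (P n) = 0)
    (hP0 : δ₀ (P 0) = 0)
    (hPn : ∀ n, 1 ≤ n →
      δ₀ (P n)
        = algebraMap (LaurentSeries F) L
            (brk q (HahnSeries.single (1 : ℤ) (1 : F)) n) • frob q (P (n - 1))) :
    ∀ l j : ℕ, l ≤ j →
      (frob q)^[l] (δ^[l] (P j))
        = algebraMap (LaurentSeries F) L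
            (Dfac q (HahnSeries.single (1 : ℤ) (1 : F)) j
              / (Dfac q (HahnSeries.single (1 : ℤ) (1 : F)) (j - l)) ^ q ^ l)
          • (frob q)^[l] (P (j - l)) :=
  delta0_iter_basic_general q hq c δ₀ hδ₀ δ hδ P hPn

end
end

section
/- For the delta operator θ = τ^{-1}θ_0 with θ_0 = Σ_{l≥1} (-1)^{l+1}/L_l · Δ^{(l)}, one has θ_0(t^{q^j}) = t^{q^j} for all j ≥ 1, and its basic sequence is P_0(t) = t, P_n(t) = D_n(t^{q^n} - t^{q^{n-1}}) for n ≥ 1. -/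
noncomputable section

/-- `L_0 = 1`, `L_i = [i] L_{i-1}`. -/
def Lfac {K : Type*} [CommRing K] (q : ℕ) (x : K) : ℕ → K
  | 0 => 1
  | i + 1 => brk q x (i + 1) * Lfac q x i

/-- The local parameter `x ∈ K = F_q((x))`. -/
def xK (F : Type*) [Field F] : LaurentSeries F := HahnSeries.single (1 : ℤ) 1

/-- The iterated Carlitz difference operators `Δ^{(l)}` on `F_q`-linear polynomials
(encoded as `ℕ →₀ K`). -/
def DeltaIter {F : Type*} [Field F] (q : ℕ) :
    ℕ → (ℕ →₀ LaurentSeries F) → (ℕ →₀ LaurentSeries F)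
  | 0, u => u
  | l + 1, u =>
      ((DeltaIter q l u).sum fun k a => Finsupp.single k (xK F ^ q ^ k * a))
        - xK F ^ q ^ l • DeltaIter q l u

/-- The operator `θ₀ = Σ_{l≥1} ((-1)^{l+1}/L_l) Δ^{(l)}` (the series is finite on each
monomial `t^{q^j}` since `Δ^{(l)}(t^{q^j}) = 0` for `l > j`). -/
def theta0 {F : Type*} [Field F] (q : ℕ) (u : ℕ →₀ LaurentSeries F) :
    ℕ →₀ LaurentSeries F :=
  u.sum fun j a =>
    a • ∑ l ∈ Finset.Icc 1 j,
      ((-1 : LaurentSeries F) ^ (l + 1) / Lfac q (xK F) l) •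
        DeltaIter q l (Finsupp.single j (1 : LaurentSeries F))

/-- The basic sequence of `θ = τ^{-1}θ₀`: `P_0(t) = t`, `P_n(t) = D_n(t^{q^n} - t^{q^{n-1}})`. -/
def Pseq {F : Type*} [Field F] (q : ℕ) (n : ℕ) : ℕ →₀ LaurentSeries F :=
  if n = 0 then Finsupp.single 0 1
  else Dfac q (xK F) n •
    (Finsupp.single n (1 : LaurentSeries F) - Finsupp.single (n - 1) (1 : LaurentSeries F))


/-!
`Δ^{(l)}` acts diagonally on monomials: it multiplies `t^{q^j}` by `∏_{i<l} (x^{q^j} - x^{q^i})`,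
and `L_l = ∏_{i<l} (x^{q^{i+1}} - x)`. Hence `θ₀ t^{q^j} = c_j t^{q^j}`, where `c_j` is a Newton
interpolation sum at the nodes `a_i = x^{q^i}` evaluated at `y = a_j`. Its partial sums telescope
to `(-1)^m ∏_{1 ≤ i ≤ m} (y - a_i) / L_m`, which vanishes at `y = a_j` once `m = j ≥ 1`; this gives
`c_j = 1` (the content of Gekeler's identity) and `c_0 = 0`. So `θ₀` kills `t` and fixes every
other monomial, and `D_n = [n] D_{n-1}^q` together with additivity of `a ↦ a^q` in characteristic
`p` yields `θ₀ P_n = [n] τ P_{n-1}`.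
-/

open Finset

section Telescoping

variable {K : Type*} [Field K]

theorem sum_range_alternating_prod_div (a : ℕ → K) (y : K) (ha : ∀ i, a (i + 1) ≠ a 0)
    (m : ℕ) :
    ∑ l ∈ range (m + 1),
        (-1) ^ l * (∏ i ∈ range l, (y - a i)) / ∏ i ∈ range l, (a (i + 1) - a 0)
      = (-1) ^ m * (∏ i ∈ range m, (y - a (i + 1))) / ∏ i ∈ range m, (a (i + 1) - a 0) := by
  have hden (n : ℕ) : ∏ i ∈ range n, (a (i + 1) - a 0) ≠ 0 :=
    prod_ne_zero_iff.mpr fun i _ => sub_ne_zero.mpr (ha i)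
  induction m with
  | zero => simp
  | succ m ih =>
    -- the next term multiplies the closed form by `(a (m+1) - y) / (a (m+1) - a 0)`
    rw [sum_range_succ, ih, prod_range_succ' (fun i => y - a i), prod_range_succ,
      prod_range_succ]
    have hm := hden m
    have hm1 := sub_ne_zero.mpr (ha m)
    field_simp
    ring

theorem sum_Icc_alternating_prod_div_eq_one (a : ℕ → K) (ha : ∀ i, a (i + 1) ≠ a 0)
    {j : ℕ} (hj : 1 ≤ j) :
    ∑ l ∈ Icc 1 j,
        (-1) ^ (l + 1) * (∏ i ∈ range l, (a j - a i)) / ∏ i ∈ range l, (a (i + 1) - a 0)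
      = 1 := by
  have htel := sum_range_alternating_prod_div a (a j) ha j
  have hvanish : ∏ i ∈ range j, (a j - a (i + 1)) = 0 :=
    prod_eq_zero (i := j - 1) (mem_range.mpr (by omega)) (by rw [Nat.sub_add_cancel hj, sub_self])
  rw [hvanish, mul_zero, zero_div, range_eq_Ico, sum_eq_sum_Ico_succ_bot (by omega),
    Ico_add_one_right_eq_Icc, zero_add] at htel
  simp only [pow_succ, mul_neg_one, neg_mul, neg_div, sum_neg_distrib]
  simp only [pow_zero, prod_range_zero, mul_one, div_one] at htel
  rw [neg_eq_iff_eq_neg]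
  exact eq_neg_of_add_eq_zero_right htel

end Telescoping

theorem Lfac_eq_prod {K : Type*} [CommRing K] (q : ℕ) (x : K) (l : ℕ) :
    Lfac q x l = ∏ i ∈ range l, (x ^ q ^ (i + 1) - x ^ q ^ 0) := by
  induction l with
  | zero => rfl
  | succ l ih => rw [Lfac, ih, prod_range_succ, brk, pow_zero, pow_one, mul_comm]

section Carlitz

variable {F : Type*} [Field F]

theorem xK_pow (m : ℕ) : xK F ^ m = HahnSeries.single (m : ℤ) 1 := by
  rw [xK, HahnSeries.single_pow, one_pow, nsmul_one]

theorem xK_pow_injective : Function.Injective (xK F ^ · : ℕ → LaurentSeries F) := by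
  intro m n h
  have := congrArg HahnSeries.order h
  simp only [xK_pow, HahnSeries.order_single (one_ne_zero (α := F))] at this
  exact_mod_cast this

theorem DeltaIter_single (q l j : ℕ) (c : LaurentSeries F) :
    DeltaIter q l (Finsupp.single j c)
      = Finsupp.single j ((∏ i ∈ range l, (xK F ^ q ^ j - xK F ^ q ^ i)) * c) := by
  induction l with
  | zero => simp [DeltaIter]
  | succ l ih =>
    rw [DeltaIter, ih, Finsupp.sum_single_index (by simp), Finsupp.smul_single,
      ← Finsupp.single_sub, prod_range_succ, smul_eq_mul]
    ring_nf

theorem theta0_single_zero (q : ℕ) (c : LaurentSeries F) :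
    theta0 q (Finsupp.single 0 c) = 0 := by
  simp [theta0]

theorem theta0_single {q : ℕ} (hq : 1 < q) {j : ℕ} (hj : 1 ≤ j) (c : LaurentSeries F) :
    theta0 q (Finsupp.single j c) = Finsupp.single j c := by
  have hpow : ∀ i, xK F ^ q ^ (i + 1) ≠ xK F ^ q ^ 0 := fun i h =>
    absurd (Nat.pow_right_injective hq (xK_pow_injective h)) (Nat.succ_ne_zero i)
  have hsum := sum_Icc_alternating_prod_div_eq_one (fun i => xK F ^ q ^ i) hpow hj
  simp only [← Lfac_eq_prod] at hsum
  simp only [theta0, DeltaIter_single, mul_one, Finsupp.smul_single, smul_eq_mul,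
    ← Finsupp.single_finsetSum, mul_sum]
  rw [Finsupp.sum_single_index (by simp)]
  conv_rhs => rw [← mul_one c, ← hsum, mul_sum]
  exact congrArg _ (sum_congr rfl fun l _ => by ring)

theorem theta0_sub (q : ℕ) (u v : ℕ →₀ LaurentSeries F) :
    theta0 q (u - v) = theta0 q u - theta0 q v :=
  Finsupp.sum_sub_index fun _ _ _ => sub_smul _ _ _

end Carlitz

section Frobenius

variable {L : Type*} [CommRing L]

theorem frob_single {q : ℕ} (hq : q ≠ 0) (k : ℕ) (a : L) :
    frob q (Finsupp.single k a) = Finsupp.single (k + 1) (a ^ q) :=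
  Finsupp.sum_single_index (by rw [zero_pow hq, Finsupp.single_zero])

theorem frob_sub (F : Type*) [Field F] [Fintype F] [Algebra F L] (u v : ℕ →₀ L) :
    frob (Fintype.card F) (u - v) = frob (Fintype.card F) u - frob (Fintype.card F) v :=
  Finsupp.sum_sub_index fun _ a b => by
    rw [← Finsupp.single_sub]
    exact congrArg _ (map_sub (FiniteField.frobeniusAlgHom F L) a b)

theorem eval1_sub (u v : ℕ →₀ L) : eval1 (u - v) = eval1 u - eval1 v :=
  Finsupp.sum_sub_index fun _ _ _ => rfl

theorem eval1_single (k : ℕ) (a : L) : eval1 (Finsupp.single k a) = a :=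
  Finsupp.sum_single_index rfl

end Frobenius

section BasicSequence

variable {F : Type*} [Field F]

theorem Pseq_eq_of_ne_zero (q : ℕ) {n : ℕ} (hn : n ≠ 0) :
    Pseq (F := F) q n
      = Finsupp.single n (Dfac q (xK F) n) - Finsupp.single (n - 1) (Dfac q (xK F) n) := by
  rw [Pseq, if_neg hn, smul_sub, Finsupp.smul_single_one, Finsupp.smul_single_one]

theorem theta0_Pseq [Fintype F] {q : ℕ} (hq : q = Fintype.card F) {n : ℕ} (hn : 1 ≤ n) :
    theta0 q (Pseq (F := F) q n) = brk q (xK F) n • frob q (Pseq (F := F) q (n - 1)) := by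
  have hq1 : 1 < q := hq ▸ Fintype.one_lt_card
  obtain ⟨m, rfl⟩ : ∃ m, n = m + 1 := ⟨n - 1, by omega⟩
  rw [Pseq_eq_of_ne_zero q m.succ_ne_zero, theta0_sub, theta0_single hq1 hn, Nat.add_sub_cancel]
  rcases m with _ | m
  · simp [Pseq, theta0_single_zero, frob_single hq1.ne_bot, Dfac]
  · rw [theta0_single hq1 (by omega), Pseq_eq_of_ne_zero q m.succ_ne_zero, hq, frob_sub,
      frob_single Fintype.card_ne_zero, frob_single Fintype.card_ne_zero, ← hq,
      Nat.sub_add_cancel (by omega), Dfac]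
    simp [Finsupp.smul_single, smul_sub]

end BasicSequence

/-- For the delta operator `θ = τ^{-1}θ₀` with `θ₀ = Σ_{l≥1} ((-1)^{l+1}/L_l) Δ^{(l)}`,
one has `θ₀(t^{q^j}) = t^{q^j}` for all `j ≥ 1`, and its basic sequence is `P_0(t) = t`,
`P_n(t) = D_n (t^{q^n} - t^{q^{n-1}})` for `n ≥ 1` (that is, `θ₀ P_0 = 0`,
`θ₀ P_n = [n] P_{n-1}^q`, `P_0(1) = 1`, `P_n(1) = 0`). -/
theorem theta0_basic_sequence {F : Type*} [Field F] [Fintype F]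
    (q : ℕ) (hq : q = Fintype.card F) :
    (∀ j, 1 ≤ j →
        theta0 q (Finsupp.single j (1 : LaurentSeries F))
          = Finsupp.single j (1 : LaurentSeries F))
    ∧ theta0 q (Pseq (F := F) q 0) = 0
    ∧ (∀ n, 1 ≤ n →
        theta0 q (Pseq (F := F) q n) = brk q (xK F) n • frob q (Pseq (F := F) q (n - 1)))
    ∧ eval1 (Pseq (F := F) q 0) = 1
    ∧ (∀ n, 1 ≤ n → eval1 (Pseq (F := F) q n) = 0) := by
  have hq1 : 1 < q := hq ▸ Fintype.one_lt_card
  refine ⟨fun j hj => theta0_single hq1 hj 1, ?_, fun n hn => theta0_Pseq hq hn, ?_, ?_⟩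
  · rw [Pseq, if_pos rfl, theta0_single_zero]
  · rw [Pseq, if_pos rfl, eval1_single]
  · intro n hn
    rw [Pseq_eq_of_ne_zero q (by omega), eval1_sub, eval1_single, eval1_single, sub_self]
end
end
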